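/- arXiv:2401.14633 — 2 statements merged into one kernel-verified Lean document; each statement's English description precedes it below -/
import Mathlib

section
/- For any half-open interval [L, H) ⊆ [0,1) of length R = H - L > 0, there exists a dyadic rational c = j/2^l with l ≤ ⌈-log₂ R⌉ + 1 such that c ∈ [L, H). Hence any arithmetic-coding interval of length R admits a binary codeword of at most ⌈log₂(1/R)⌉ + 1 bits. -/
open Real Finset

/-! Taking `l = ⌈-log₂ R⌉` gives `2 ^ l ≥ 1 / R`, so the interval `[L * 2 ^ l, H * 2 ^ l)` has length
at least `1` and contains the integer `⌈L * 2 ^ l⌉`; dividing back by `2 ^ l` gives the dyadic point. -/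

theorem exists_nat_div_mem_Ico_of_one_le_mul {L H s : ℝ} (hL : 0 ≤ L) (hs : 0 < s)
    (hlen : 1 ≤ (H - L) * s) : ∃ j : ℕ, L ≤ j / s ∧ j / s < H := by
  refine ⟨⌈L * s⌉₊, (le_div_iff₀ hs).2 (Nat.le_ceil _), (div_lt_iff₀ hs).2 ?_⟩
  calc (⌈L * s⌉₊ : ℝ) < L * s + 1 := Nat.ceil_lt_add_one (by positivity)
    _ ≤ H * s := by linarith

theorem inv_le_zpow_ceil_neg_logb {b R : ℝ} (hb : 1 < b) (hR : 0 < R) :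
    R⁻¹ ≤ b ^ ⌈-logb b R⌉ :=
  calc R⁻¹ = b ^ (-logb b R) := by
        rw [rpow_neg (by positivity), rpow_logb (by positivity) hb.ne' hR]
    _ ≤ b ^ (⌈-logb b R⌉ : ℝ) := rpow_le_rpow_of_exponent_le hb.le (Int.le_ceil _)
    _ = b ^ ⌈-logb b R⌉ := rpow_intCast b _

/-- Any interval `[L, H) ⊆ [0,1)` of length `R = H - L` contains a dyadic rational
`j / 2 ^ l` with `l ≤ ⌈-log₂ R⌉ + 1`. -/
theorem dyadic_in_interval
    (L H : ℝ) (hL : 0 ≤ L) (hLH : L < H) (hH : H ≤ 1) :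
    ∃ l : ℕ, ∃ j : ℕ, (l : ℤ) ≤ ⌈-Real.logb 2 (H - L)⌉ + 1 ∧
      L ≤ (j : ℝ) / 2 ^ l ∧ (j : ℝ) / 2 ^ l < H := by
  have hR : 0 < H - L := sub_pos.2 hLH
  have hceil : 0 ≤ ⌈-logb 2 (H - L)⌉ :=
    Int.ceil_nonneg (neg_nonneg.2 (logb_nonpos one_lt_two hR.le (by linarith)))
  obtain ⟨l, hl⟩ := Int.eq_ofNat_of_zero_le hceil
  have hlen : 1 ≤ (H - L) * 2 ^ l := by
    have := inv_le_zpow_ceil_neg_logb one_lt_two hR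
    rw [hl, zpow_natCast, inv_le_iff_one_le_mul₀' hR] at this
    exact this
  obtain ⟨j, hj⟩ := exists_nat_div_mem_Ico_of_one_le_mul hL (by positivity) hlen
  exact ⟨l, j, by omega, hj⟩
end

section
/- Distinct synonymous-set sequences yield disjoint final intervals: in arithmetic coding over synonymous sets with fixed per-step probabilities, if two sequences (r_1,...,r_m) ≠ (r'_1,...,r'_m) of chosen-set indices both have positive probability, then their final coding intervals [L_m, H_m) and [L'_m, H'_m) are disjoint. -/
open Real Finset

/-- Lower endpoint of the arithmetic-coding interval after `m` steps, where at step `i`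
the set of index `r i` is chosen among `K` synonymous sets with probabilities `q i`. -/
noncomputable def acL {K : ℕ} (q : ℕ → Fin K → ℝ) (r : ℕ → Fin K) : ℕ → ℝ
  | 0 => 0
  | i + 1 => acL q r i +
      (∏ j ∈ Finset.range i, q j (r j)) * ∑ k ∈ Finset.univ.filter (fun k => k < r i), q i k

/-- Upper endpoint of the arithmetic-coding interval after `m` steps. -/
noncomputable def acH {K : ℕ} (q : ℕ → Fin K → ℝ) (r : ℕ → Fin K) (m : ℕ) : ℝ :=
  acL q r m + ∏ j ∈ Finset.range m, q j (r j)

/-!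
The coding intervals are nested, and at step `i` the interval of index `a` is followed by
the intervals of all larger indices, since its right end `L + w (∑_{k<a} q k + q a)` is at most
the left end `L + w ∑_{k<b} q k` of the interval of any `b > a`. So if `i` is the first step at
which two sequences differ, say `r i < r' i`, the interval of `r` ends after `i + 1` steps no
later than the interval of `r'` starts, and the later intervals stay inside these.
-/

section CumulativeSum

variable {ι : Type*} [Fintype ι] [LinearOrder ι] {f : ι → ℝ}

lemma sum_lt_add_self_eq_sum_le (a : ι) :
    ∑ k with k < a, f k + f a = ∑ k with k ≤ a, f k := by
  have h : filter (· ≤ a) univ = insert a (filter (· < a) univ) := by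
    ext k
    simp [le_iff_lt_or_eq, or_comm]
  rw [h, sum_insert (by simp), add_comm]

lemma sum_lt_add_self_le_sum_lt (hf : ∀ k, 0 ≤ f k) {a b : ι} (hab : a < b) :
    ∑ k with k < a, f k + f a ≤ ∑ k with k < b, f k := by
  rw [sum_lt_add_self_eq_sum_le]
  refine sum_le_sum_of_subset_of_nonneg (fun k hk => ?_) fun k _ _ => hf k
  simp only [mem_filter, mem_univ, true_and] at hk ⊢
  exact hk.trans_lt hab

lemma sum_lt_add_self_le_sum (hf : ∀ k, 0 ≤ f k) (a : ι) :
    ∑ k with k < a, f k + f a ≤ ∑ k, f k := by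
  rw [sum_lt_add_self_eq_sum_le]
  exact sum_le_sum_of_subset_of_nonneg (subset_univ _) fun k _ _ => hf k

end CumulativeSum

lemma Nat.exists_first_ne {α : Type*} {f g : ℕ → α} {m : ℕ} (h : ∃ i < m, f i ≠ g i) :
    ∃ i < m, f i ≠ g i ∧ ∀ j < i, f j = g j := by
  classical
  obtain ⟨him, hne⟩ := Nat.find_spec h
  refine ⟨Nat.find h, him, hne, fun j hj => ?_⟩
  by_contra hj'
  exact Nat.find_min h hj ⟨hj.trans him, hj'⟩

section Intervals

variable {K : ℕ} {q : ℕ → Fin K → ℝ} {r r' : ℕ → Fin K}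

lemma acL_succ (q : ℕ → Fin K → ℝ) (r : ℕ → Fin K) (n : ℕ) :
    acL q r (n + 1) = acL q r n + (∏ j ∈ range n, q j (r j)) * ∑ k with k < r n, q n k :=
  rfl

lemma acH_succ (q : ℕ → Fin K → ℝ) (r : ℕ → Fin K) (n : ℕ) :
    acH q r (n + 1) =
      acL q r n + (∏ j ∈ range n, q j (r j)) * (∑ k with k < r n, q n k + q n (r n)) := by
  rw [acH, acL_succ, prod_range_succ]
  ring

lemma acL_mono (hq0 : ∀ i k, 0 ≤ q i k) : Monotone (acL q r) :=
  monotone_nat_of_le_succ fun n => le_add_of_nonneg_right <|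
    mul_nonneg (prod_nonneg fun j _ => hq0 j (r j)) (sum_nonneg fun k _ => hq0 n k)

lemma acH_anti (hq0 : ∀ i k, 0 ≤ q i k) (hsum : ∀ i, ∑ k, q i k = 1) : Antitone (acH q r) :=
  antitone_nat_of_succ_le fun n => by
    rw [acH_succ, acH]
    refine (add_le_add_iff_left _).2 <|
      mul_le_of_le_one_right (prod_nonneg fun j _ => hq0 j (r j)) ?_
    exact hsum n ▸ sum_lt_add_self_le_sum (hq0 n) (r n)

lemma acL_congr {n : ℕ} (h : ∀ j < n, r j = r' j) : acL q r n = acL q r' n := by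
  induction n with
  | zero => rfl
  | succ n ih =>
    rw [acL_succ, acL_succ, ih fun j hj => h j (hj.trans n.lt_succ_self), h n n.lt_succ_self,
      prod_congr rfl fun j hj => by rw [h j ((mem_range.1 hj).trans n.lt_succ_self)]]

lemma acH_succ_le_acL_succ (hq0 : ∀ i k, 0 ≤ q i k) {i : ℕ} (hpre : ∀ j < i, r j = r' j)
    (hlt : r i < r' i) : acH q r (i + 1) ≤ acL q r' (i + 1) := by
  rw [acH_succ, acL_succ, acL_congr hpre,
    prod_congr rfl fun j hj => by rw [hpre j (mem_range.1 hj)]]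
  exact (add_le_add_iff_left _).2 (mul_le_mul_of_nonneg_left (sum_lt_add_self_le_sum_lt (hq0 i) hlt)
    (prod_nonneg fun j _ => hq0 j (r' j)))

lemma acH_le_acL_of_first_lt (hq0 : ∀ i k, 0 ≤ q i k) (hsum : ∀ i, ∑ k, q i k = 1)
    {i m : ℕ} (him : i < m) (hpre : ∀ j < i, r j = r' j) (hlt : r i < r' i) :
    acH q r m ≤ acL q r' m :=
  calc acH q r m ≤ acH q r (i + 1) := acH_anti hq0 hsum him
    _ ≤ acL q r' (i + 1) := acH_succ_le_acL_succ hq0 hpre hlt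
    _ ≤ acL q r' m := acL_mono hq0 him

end Intervals

theorem ac_intervals_disjoint_general
    {K : ℕ} (q : ℕ → Fin K → ℝ) (r r' : ℕ → Fin K) (m : ℕ)
    (hq0 : ∀ i k, 0 ≤ q i k) (hsum : ∀ i, ∑ k, q i k = 1)
    (hne : ∃ i < m, r i ≠ r' i) :
    Disjoint (Set.Ico (acL q r m) (acH q r m)) (Set.Ico (acL q r' m) (acH q r' m)) := by
  obtain ⟨i, him, hi, hpre⟩ := Nat.exists_first_ne hne
  rcases hi.lt_or_gt with hlt | hlt
  · exact Set.Ico_disjoint_Ico_same.mono_right <|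
      Set.Ico_subset_Ico_left (acH_le_acL_of_first_lt hq0 hsum him hpre hlt)
  · exact Disjoint.symm <| Set.Ico_disjoint_Ico_same.mono_right <|
      Set.Ico_subset_Ico_left <|
        acH_le_acL_of_first_lt hq0 hsum him (fun j hj => (hpre j hj).symm) hlt

/-- Distinct synonymous-set sequences of positive probability yield disjoint final
arithmetic-coding intervals. -/
theorem ac_intervals_disjoint
    {K : ℕ} (q : ℕ → Fin K → ℝ) (r r' : ℕ → Fin K) (m : ℕ)
    (hq0 : ∀ i k, 0 ≤ q i k) (hsum : ∀ i, ∑ k, q i k = 1)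
    (hr : ∀ i, 0 < q i (r i)) (hr' : ∀ i, 0 < q i (r' i))
    (hne : ∃ i < m, r i ≠ r' i) :
    Disjoint (Set.Ico (acL q r m) (acH q r m)) (Set.Ico (acL q r' m) (acH q r' m)) :=
  ac_intervals_disjoint_general q r r' m hq0 hsum hne
end
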